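/- Let p be a prime, χ the standard additive character on ℚ_p, and C ⊂ ℚ_p a set of p elements. Then ∑_{c∈C} χ(c) = 0 if and only if for all distinct c, c' ∈ C, |c - c'|_p = p. -/

import Mathlib

open scoped BigOperators

/-- Every `p`-adic number is within distance `1` of a rational of the form `k / p^n`. -/
theorem padicFrac_exists (p : ℕ) [hp : Fact p.Prime] (x : ℚ_[p]) :
    ∃ kn : ℤ × ℕ, ‖x - (kn.1 : ℚ_[p]) / (p : ℚ_[p]) ^ kn.2‖ ≤ 1 := by
  obtain ⟨n, hn⟩ := exists_nat_gt ‖x‖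
  have hp1 : 1 < (p : ℝ) := by exact_mod_cast hp.out.one_lt
  have hple : (n : ℝ) < (p : ℝ) ^ n := by exact_mod_cast Nat.lt_pow_self (n := n) hp.out.one_lt
  have hz : ‖x * (p : ℚ_[p]) ^ n‖ ≤ 1 := by
    rw [norm_mul, norm_pow, Padic.norm_p]
    have h1 : ‖x‖ ≤ (p : ℝ) ^ n := le_of_lt (lt_trans hn hple)
    have h2 : (0:ℝ) < (p : ℝ) ^ n := by positivity
    calc ‖x‖ * ((p:ℝ)⁻¹) ^ n ≤ (p : ℝ) ^ n * ((p:ℝ)⁻¹) ^ n := by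
          gcongr
      _ = 1 := by rw [← mul_pow, mul_inv_cancel₀ (by positivity), one_pow]
  set z : ℤ_[p] := ⟨x * (p : ℚ_[p]) ^ n, hz⟩ with hzdef
  obtain ⟨y, hy⟩ := Ideal.mem_span_singleton'.mp (PadicInt.appr_spec n z)
  refine ⟨((z.appr n : ℤ), n), ?_⟩
  have hpne : ((p : ℚ_[p]) ^ n) ≠ 0 := by
    apply pow_ne_zero
    exact_mod_cast hp.out.ne_zero
  have hxz : x - ((z.appr n : ℤ) : ℚ_[p]) / (p : ℚ_[p]) ^ n
      = ((z - (z.appr n : ℤ_[p]) : ℤ_[p]) : ℚ_[p]) / (p : ℚ_[p]) ^ n := by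
    push_cast
    field_simp [hzdef]
    rfl
  rw [hxz, norm_div]
  have hnorm : ‖((z - (z.appr n : ℤ_[p]) : ℤ_[p]) : ℚ_[p])‖ ≤ ((p:ℝ)⁻¹) ^ n := by
    rw [← PadicInt.norm_def, ← hy]
    rw [norm_mul, norm_pow, PadicInt.norm_p]
    calc ‖y‖ * ((p:ℝ)⁻¹) ^ n ≤ 1 * ((p:ℝ)⁻¹) ^ n := by
          gcongr; exact y.2
      _ = ((p:ℝ)⁻¹) ^ n := one_mul _
  have hden : ‖(p : ℚ_[p]) ^ n‖ = ((p:ℝ)⁻¹) ^ n := by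
    rw [norm_pow, Padic.norm_p]
  rw [hden]
  rw [div_le_one (by positivity)]
  exact hnorm

/-- The standard additive character `χ(x) = e^{2πi {x}}` on `ℚ_p`, where `{x}` is
the `p`-adic fractional part of `x`. -/
noncomputable def stdChar (p : ℕ) [Fact p.Prime] (x : ℚ_[p]) : ℂ :=
  Complex.exp (2 * Real.pi * Complex.I *
    (((Classical.choose (padicFrac_exists p x)).1 : ℂ) /
      (p : ℂ) ^ (Classical.choose (padicFrac_exists p x)).2))





lemma exp_rep_eq (p : ℕ) [hp : Fact p.Prime] (x : ℚ_[p]) (k k' : ℤ) (n n' : ℕ)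
    (h : ‖x - (k : ℚ_[p]) / (p : ℚ_[p]) ^ n‖ ≤ 1)
    (h' : ‖x - (k' : ℚ_[p]) / (p : ℚ_[p]) ^ n'‖ ≤ 1) :
    Complex.exp (2 * Real.pi * Complex.I * ((k : ℂ) / (p : ℂ) ^ n)) =
    Complex.exp (2 * Real.pi * Complex.I * ((k' : ℂ) / (p : ℂ) ^ n')) := by
  have hpQ : ((p : ℚ_[p])) ≠ 0 := by exact_mod_cast hp.out.ne_zero
  have hpC : ((p : ℂ)) ≠ 0 := by exact_mod_cast hp.out.ne_zero
  -- the difference of the two rationals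
  have hdiff : ‖((k' * p ^ n - k * p ^ n' : ℤ) : ℚ_[p]) / (p : ℚ_[p]) ^ (n + n')‖ ≤ 1 := by
    have : ((k' * p ^ n - k * p ^ n' : ℤ) : ℚ_[p]) / (p : ℚ_[p]) ^ (n + n')
        = (x - (k : ℚ_[p]) / (p : ℚ_[p]) ^ n) - (x - (k' : ℚ_[p]) / (p : ℚ_[p]) ^ n') := by
      push_cast
      field_simp
      ring
    rw [this, sub_eq_add_neg]
    refine le_trans (Padic.nonarchimedean _ _) (max_le h ?_)
    rw [norm_neg]; exact h'
  have hdvd : ((p : ℤ) ^ (n + n')) ∣ (k' * p ^ n - k * p ^ n') := by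
    rw [← Padic.norm_int_le_pow_iff_dvd]
    have hnorm : ‖((p : ℚ_[p]) ^ (n + n'))‖ = (p : ℝ) ^ (-(n + n') : ℤ) := by
      rw [norm_pow, Padic.norm_p, inv_pow, ← zpow_natCast, ← zpow_neg]
      norm_cast
    calc ‖((k' * p ^ n - k * p ^ n' : ℤ) : ℚ_[p])‖
        = ‖((k' * p ^ n - k * p ^ n' : ℤ) : ℚ_[p]) / (p : ℚ_[p]) ^ (n + n')‖ * ‖(p : ℚ_[p]) ^ (n + n')‖ := by
          rw [← norm_mul, div_mul_cancel₀]
          exact pow_ne_zero _ hpQ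
      _ ≤ 1 * (p : ℝ) ^ (-(n + n') : ℤ) := by rw [hnorm]; gcongr
      _ = (p : ℝ) ^ (-(n + n') : ℤ) := one_mul _
  obtain ⟨m, hm⟩ := hdvd
  have key : (k' : ℂ) / (p : ℂ) ^ n' = (k : ℂ) / (p : ℂ) ^ n + m := by
    have hC : (k' : ℂ) * (p:ℂ) ^ n - (k:ℂ) * (p:ℂ) ^ n' = (p:ℂ) ^ (n+n') * m := by
      exact_mod_cast congrArg (fun z : ℤ => (z : ℂ)) hm
    field_simp
    push_cast at hC ⊢
    linear_combination hC
  rw [Complex.exp_eq_exp_iff_exists_int]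
  refine ⟨-m, ?_⟩
  rw [key]; push_cast; ring

lemma stdChar_eq (p : ℕ) [Fact p.Prime] (x : ℚ_[p]) (k : ℤ) (n : ℕ)
    (h : ‖x - (k : ℚ_[p]) / (p : ℚ_[p]) ^ n‖ ≤ 1) :
    stdChar p x = Complex.exp (2 * Real.pi * Complex.I * ((k:ℂ) / (p:ℂ)^n)) :=
  exp_rep_eq p x _ k _ n (Classical.choose_spec (padicFrac_exists p x)) h

lemma norm_transfer (p : ℕ) [hp : Fact p.Prime] (x y : ℚ_[p]) (h : ‖x - y‖ ≤ 1) :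
    ‖x‖ = p ↔ ‖y‖ = p := by
  have hp1 : (1:ℝ) < p := by exact_mod_cast hp.out.one_lt
  have hyx : ‖y - x‖ ≤ 1 := by rw [norm_sub_rev]; exact h
  constructor
  · intro hx
    have hne : ‖x‖ ≠ ‖y - x‖ := by rw [hx]; intro hh; linarith [hyx, hh.symm.le]
    have h2 := Padic.add_eq_max_of_ne (q := x) (r := y - x) hne
    rw [add_sub_cancel] at h2
    rw [h2, hx]
    rw [max_eq_left (by linarith)]
  · intro hy
    have hne : ‖x - y‖ ≠ ‖y‖ := by rw [hy]; intro hh; linarith [h, hh.le]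
    have h2 := Padic.add_eq_max_of_ne (q := x - y) (r := y) hne
    rw [sub_add_cancel] at h2
    rw [h2, hy]
    rw [max_eq_right (by linarith)]

-- D
lemma norm_int_div_pow_eq_p_iff (p : ℕ) [hp : Fact p.Prime] (d : ℤ) (N : ℕ) (hN : 1 ≤ N) :
    ‖((d : ℚ_[p]) / (p : ℚ_[p]) ^ N)‖ = p ↔ ((p:ℤ)^(N-1) ∣ d ∧ ¬ (p:ℤ)^N ∣ d) := by
  have hp1 : (1:ℝ) < p := by exact_mod_cast hp.out.one_lt
  have hp0 : (0:ℝ) < p := by linarith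
  have hpQ : ((p : ℚ_[p])) ≠ 0 := by exact_mod_cast hp.out.ne_zero
  have hden : ‖((p:ℚ_[p]))^N‖ = (p:ℝ)^(-(N:ℤ)) := by
    rw [norm_pow, Padic.norm_p, inv_pow, ← zpow_natCast, ← zpow_neg]
  have hnorm : ‖((d : ℚ_[p]) / (p : ℚ_[p]) ^ N)‖ = ‖(d:ℚ_[p])‖ * (p:ℝ)^(N:ℤ) := by
    rw [norm_div, hden, zpow_neg, div_eq_mul_inv, inv_inv]
  rw [hnorm]
  have hpne : (p:ℝ) ≠ 0 := ne_of_gt hp0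
  have hcast : (-(N-1:ℕ):ℤ) = 1 + -(N:ℤ) := by omega
  have hiff : ‖(d:ℚ_[p])‖ * (p:ℝ)^(N:ℤ) = p ↔ ‖(d:ℚ_[p])‖ = (p:ℝ)^(-(N-1:ℕ):ℤ) := by
    constructor
    · intro h
      calc ‖(d:ℚ_[p])‖ = ‖(d:ℚ_[p])‖ * (p:ℝ)^(N:ℤ) * (p:ℝ)^(-(N:ℤ)) := by
            rw [mul_assoc, ← zpow_add₀ hpne, add_neg_cancel, zpow_zero, mul_one]
        _ = p * (p:ℝ)^(-(N:ℤ)) := by rw [h]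
        _ = (p:ℝ)^((1:ℤ) + -(N:ℤ)) := by rw [zpow_add₀ hpne, zpow_one]
        _ = (p:ℝ)^(-(N-1:ℕ):ℤ) := by rw [hcast]
    · intro h
      rw [h, hcast, ← zpow_add₀ hpne]
      have : (1:ℤ) + -(N:ℤ) + N = 1 := by ring
      rw [this, zpow_one]
  rw [hiff]
  constructor
  · intro h
    constructor
    · rw [← Padic.norm_int_le_pow_iff_dvd]; rw [h]
    · intro hdvd
      rw [← Padic.norm_int_le_pow_iff_dvd] at hdvd
      rw [h] at hdvd
      have : (-(N-1:ℕ):ℤ) ≤ (-(N:ℕ):ℤ) := by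
        exact_mod_cast (zpow_le_zpow_iff_right₀ hp1).mp hdvd
      omega
  · rintro ⟨h1, h2⟩
    obtain ⟨u, hu⟩ := h1
    have hpu : ¬ (p:ℤ) ∣ u := by
      intro ⟨v, hv⟩
      refine h2 ⟨v, ?_⟩
      have hexp : (p:ℤ)^N = (p:ℤ)^(N-1) * p := by
        rw [← pow_succ]
        congr 1
        omega
      rw [hu, hv, hexp]
      ring
    have hunorm : ‖(u : ℚ_[p])‖ = 1 := by
      rw [← Padic.norm_intCast_lt_one_iff] at hpu
      have hle : ‖(u:ℚ_[p])‖ ≤ 1 := Padic.norm_int_le_one u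
      rcases lt_or_eq_of_le hle with h | h
      · exact absurd h hpu
      · exact h
    rw [hu]
    push_cast
    rw [norm_mul, norm_pow, Padic.norm_p, hunorm, mul_one, inv_pow, ← zpow_natCast, ← zpow_neg]

-- E
lemma zpow_congr_mod (ω : ℂ) (hω : ω ≠ 0) (m : ℕ) (h1 : ω ^ m = 1) (i j : ℤ)
    (hd : (m:ℤ) ∣ i - j) : ω ^ i = ω ^ j := by
  obtain ⟨k, hk⟩ := hd
  have : i = j + m * k := by linarith
  rw [this, zpow_add₀ hω, zpow_mul, zpow_natCast, h1, one_zpow, mul_one]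

-- F
lemma sum_range_mul_eq (M P : ℕ) (f : ℕ → ℕ) :
    ∑ j ∈ Finset.range (P * M), f j = ∑ s ∈ Finset.range P, ∑ r ∈ Finset.range M, f (r + s * M) := by
  induction P with
  | zero => simp
  | succ n ih =>
    rw [Finset.sum_range_succ, ← ih, Nat.succ_mul, Finset.sum_range_add]
    simp [Nat.add_comm]

-- G
open Polynomial in
lemma coeff_geom_mul (Q : ℚ[X]) (M : ℕ) (hM : 0 < M) (pp : ℕ) (hQ : Q.natDegree < M)
    (r s : ℕ) (hr : r < M) (hs : s < pp) :
    ((∑ i ∈ Finset.range pp, (X^M)^i) * Q).coeff (r + s*M) = Q.coeff r := by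
  rw [Finset.sum_mul, Polynomial.finset_sum_coeff]
  have key : ∀ i ∈ Finset.range pp, ((X^M)^i * Q).coeff (r + s*M)
      = if i = s then Q.coeff r else 0 := by
    intro i _
    rw [← pow_mul, mul_comm ((X:ℚ[X])^(M*i)) Q, Polynomial.coeff_mul_X_pow']
    rcases lt_trichotomy i s with h | h | h
    · rw [if_pos (by nlinarith), if_neg (by omega)]
      apply Polynomial.coeff_eq_zero_of_natDegree_lt
      have : r + s * M - M * i ≥ M := by
        have : s * M - M * i ≥ M := by
          rw [mul_comm M i]
          have := Nat.sub_le_sub_right (Nat.mul_le_mul_right M (Nat.succ_le_of_lt h)) 0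
          calc M ≤ (i+1)*M - i*M := by rw [Nat.succ_mul, Nat.add_sub_cancel_left]
            _ ≤ s*M - i*M := by
                apply Nat.sub_le_sub_right
                exact Nat.mul_le_mul_right M (Nat.succ_le_of_lt h)
        omega
      omega
    · subst h
      rw [if_pos (by nlinarith [Nat.mul_comm M i]), if_pos rfl]
      congr 1
      rw [mul_comm M i]
      omega
    · rw [if_neg, if_neg (by omega)]
      rw [mul_comm M i]
      intro hcon
      nlinarith
  rw [Finset.sum_congr rfl key, Finset.sum_ite_eq' (Finset.range pp) s (fun _ => Q.coeff r),
    if_pos (Finset.mem_range.mpr hs)]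


open Polynomial in
theorem stmt3 (p : ℕ) [Fact p.Prime] (C : Finset ℚ_[p]) (hC : C.card = p) :
    (∑ c ∈ C, stdChar p c = 0) ↔
      ∀ c ∈ C, ∀ c' ∈ C, c ≠ c' → ‖c - c'‖ = (p : ℝ) := by
  classical
  have hp : Fact p.Prime := inferInstance
  have hp1 : 1 < p := hp.out.one_lt
  have hpne : p ≠ 0 := hp.out.ne_zero
  haveI : NeZero p := ⟨hpne⟩
  have hpQ : ((p : ℚ_[p])) ≠ 0 := by exact_mod_cast hpne
  set N : ℕ := (C.sup fun c => (Classical.choose (padicFrac_exists p c)).2) + 1 with hNdef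
  have hN1 : 1 ≤ N := Nat.le_add_left 1 _
  set a : ℚ_[p] → ℤ := fun c => (Classical.choose (padicFrac_exists p c)).1 *
    (p : ℤ) ^ (N - (Classical.choose (padicFrac_exists p c)).2) with hadef
  have hrep : ∀ c ∈ C, ‖c - (a c : ℚ_[p]) / (p : ℚ_[p]) ^ N‖ ≤ 1 := by
    intro c hc
    have hle : (Classical.choose (padicFrac_exists p c)).2 ≤ N := by
      have h1 := Finset.le_sup
        (f := fun c : ℚ_[p] => (Classical.choose (padicFrac_exists p c)).2) hc
      refine le_trans h1 ?_
      rw [hNdef]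
      exact Nat.le_succ _
    have heq : (a c : ℚ_[p]) / (p : ℚ_[p]) ^ N =
        ((Classical.choose (padicFrac_exists p c)).1 : ℚ_[p]) /
          (p : ℚ_[p]) ^ (Classical.choose (padicFrac_exists p c)).2 := by
      rw [hadef]
      push_cast
      rw [div_eq_div_iff (pow_ne_zero _ hpQ) (pow_ne_zero _ hpQ), mul_assoc, ← pow_add]
      congr 2
      omega
    rw [heq]
    exact Classical.choose_spec (padicFrac_exists p c)
  set ζ : ℂ := Complex.exp (2 * Real.pi * Complex.I / ((p ^ N : ℕ) : ℂ)) with hζdef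
  have hζprim : IsPrimitiveRoot ζ (p ^ N) :=
    Complex.isPrimitiveRoot_exp (p ^ N) (pow_ne_zero N hpne)
  have hζ0 : ζ ≠ 0 := Complex.exp_ne_zero _
  have hζpow : ζ ^ (p ^ N) = 1 := hζprim.pow_eq_one
  have hchar : ∀ c ∈ C, stdChar p c = ζ ^ (a c) := by
    intro c hc
    rw [stdChar_eq p c (a c) N (hrep c hc), hζdef, ← Complex.exp_int_mul]
    congr 1
    have : (((p ^ N : ℕ) : ℂ)) = (p : ℂ) ^ N := by push_cast; ring
    rw [this]
    ring
  have hkey : ∀ c ∈ C, ∀ c' ∈ C, (‖c - c'‖ = p ↔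
      ((p:ℤ)^(N-1) ∣ (a c - a c') ∧ ¬ (p:ℤ)^N ∣ (a c - a c'))) := by
    intro c hc c' hc'
    have hsub : ‖(c - c') - ((a c - a c' : ℤ) : ℚ_[p]) / (p : ℚ_[p]) ^ N‖ ≤ 1 := by
      have heq : (c - c') - ((a c - a c' : ℤ) : ℚ_[p]) / (p : ℚ_[p]) ^ N =
          (c - (a c : ℚ_[p]) / (p : ℚ_[p]) ^ N) +
          -(c' - (a c' : ℚ_[p]) / (p : ℚ_[p]) ^ N) := by
        push_cast
        ring
      rw [heq]
      refine le_trans (Padic.nonarchimedean _ _) (max_le (hrep c hc) ?_)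
      rw [norm_neg]; exact hrep c' hc'
    rw [← norm_int_div_pow_eq_p_iff p _ N hN1]
    exact norm_transfer p _ _ hsub
  constructor
  · -- sum = 0 → distances
    intro hsum
    set M : ℕ := p ^ (N - 1) with hMdef
    have hM0 : 0 < M := pow_pos hp.out.pos _
    have hMN : p ^ N = p * M := by
      rw [hMdef, ← pow_succ']
      congr 1
    have hpN0 : (0:ℤ) < (p:ℤ) ^ N := by positivity
    set e : ℚ_[p] → ℕ := fun c => ((a c) % ((p:ℤ) ^ N)).toNat with hedef
    have he_nonneg : ∀ c, ((e c : ℤ)) = (a c) % ((p:ℤ) ^ N) := by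
      intro c
      rw [hedef]
      exact Int.toNat_of_nonneg (Int.emod_nonneg _ (ne_of_gt hpN0))
    have he_lt : ∀ c, e c < p ^ N := by
      intro c
      have h2 := Int.emod_lt_of_pos (a c) hpN0
      have h1 := he_nonneg c
      have h3 : ((e c : ℤ)) < ((p ^ N : ℕ) : ℤ) := by rw [h1]; exact_mod_cast h2
      exact_mod_cast h3
    have hae : ∀ c, ((p:ℤ) ^ N) ∣ (a c - (e c : ℤ)) := by
      intro c
      refine ⟨a c / (p:ℤ)^N, ?_⟩
      rw [he_nonneg c, Int.emod_def]
      ring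
    have hζe : ∀ c ∈ C, stdChar p c = ζ ^ (e c) := by
      intro c hc
      rw [hchar c hc, ← zpow_natCast ζ (e c)]
      refine zpow_congr_mod ζ hζ0 (p^N) hζpow _ _ ?_
      exact_mod_cast hae c
    set P : Polynomial ℚ := ∑ c ∈ C, (X : ℚ[X]) ^ (e c) with hPdef
    have hPζ : Polynomial.aeval ζ P = 0 := by
      rw [hPdef, map_sum, ← hsum]
      refine Finset.sum_congr rfl fun c hc => ?_
      rw [map_pow, Polynomial.aeval_X, ← hζe c hc]
    obtain ⟨Q, hPQ⟩ : Polynomial.cyclotomic (p ^ N) ℚ ∣ P := by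
      rw [Polynomial.cyclotomic_eq_minpoly_rat hζprim (pow_pos hp.out.pos N)]
      exact minpoly.dvd ℚ ζ hPζ
    set cnt : ℕ → ℕ := fun j => (C.filter (fun c => e c = j)).card with hcntdef
    have hcoeff : ∀ j, P.coeff j = (cnt j : ℚ) := by
      intro j
      rw [hPdef, Polynomial.finset_sum_coeff, hcntdef]
      rw [← Finset.sum_boole]
      refine Finset.sum_congr rfl fun c _ => ?_
      rw [Polynomial.coeff_X_pow]
      by_cases h : e c = j
      · simp [h]
      · simp [h, Ne.symm h]
    have hP1 : P.eval 1 = (p : ℚ) := by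
      rw [hPdef, Polynomial.eval_finset_sum]
      simp [hC]
    have hPne : P ≠ 0 := by
      intro h
      rw [h] at hP1
      simp at hP1
      exact hpne (by exact_mod_cast hP1.symm)
    have hQne : Q ≠ 0 := by
      intro h
      rw [h, mul_zero] at hPQ
      exact hPne hPQ
    have hPdeg : P.natDegree ≤ p ^ N - 1 := by
      rw [hPdef]
      refine Polynomial.natDegree_sum_le_of_forall_le _ _ fun c _ => ?_
      rw [Polynomial.natDegree_X_pow]
      have := he_lt c
      omega
    have hMle : M ≤ p ^ N := by
      rw [hMN]
      exact Nat.le_mul_of_pos_left _ hp.out.pos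
    have hpN1 : 1 ≤ p ^ N := Nat.one_le_iff_ne_zero.mpr (pow_ne_zero _ hpne)
    have hPhideg : (Polynomial.cyclotomic (p ^ N) ℚ).natDegree = p ^ N - M := by
      rw [Polynomial.natDegree_cyclotomic, Nat.totient_prime_pow hp.out (by omega : 0 < N),
        ← hMdef]
      zify [hMle, (by omega : 1 ≤ p)]
      have hcast2 : ((p:ℤ))^N = (p:ℤ) * (M:ℤ) := by
        exact_mod_cast congrArg (fun n : ℕ => (n:ℤ)) hMN
      rw [hcast2]
      ring
    have hdegQ : Q.natDegree < M := by
      have hmul := Polynomial.natDegree_mul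
        (Polynomial.cyclotomic_ne_zero (p^N) ℚ) hQne
      rw [← hPQ, hPhideg] at hmul
      omega
    have hper : ∀ r < M, ∀ s < p, P.coeff (r + s * M) = Q.coeff r := by
      intro r hr s hs
      have hcyc2 : Polynomial.cyclotomic (p ^ N) ℚ
          = ∑ i ∈ Finset.range p, ((X:ℚ[X]) ^ M) ^ i := by
        have hNe : p ^ N = p ^ ((N-1) + 1) := by congr 1
        rw [hNe, Polynomial.cyclotomic_prime_pow_eq_geom_sum hp.out, hMdef]
      rw [hPQ, hcyc2]
      exact coeff_geom_mul Q M hM0 p hdegQ r s hr hs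
    have hper' : ∀ r < M, ∀ s < p, cnt (r + s * M) = cnt r := by
      intro r hr s hs
      have h1 := hper r hr s hs
      have h2 := hper r hr 0 hp.out.pos
      rw [hcoeff] at h1 h2
      rw [zero_mul, add_zero] at h2
      have h3 := h1.trans h2.symm
      exact_mod_cast h3
    have htot : ∑ j ∈ Finset.range (p ^ N), cnt j = p := by
      rw [hcntdef, ← Finset.card_eq_sum_card_fiberwise (f := e) (t := Finset.range (p^N))
        (fun c _ => Finset.mem_range.mpr (he_lt c)), hC]
    have hone : ∑ r ∈ Finset.range M, cnt r = 1 := by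
      have hcalc : ∑ j ∈ Finset.range (p ^ N), cnt j
          = p * ∑ r ∈ Finset.range M, cnt r := by
        calc ∑ j ∈ Finset.range (p ^ N), cnt j
            = ∑ s ∈ Finset.range p, ∑ r ∈ Finset.range M, cnt (r + s * M) := by
              rw [hMN, sum_range_mul_eq]
          _ = ∑ _s ∈ Finset.range p, ∑ r ∈ Finset.range M, cnt r := by
              refine Finset.sum_congr rfl fun s hs => ?_
              exact Finset.sum_congr rfl fun r hr =>
                hper' r (Finset.mem_range.mp hr) s (Finset.mem_range.mp hs)
          _ = p * ∑ r ∈ Finset.range M, cnt r := by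
              rw [Finset.sum_const, Finset.card_range, smul_eq_mul]
      have h3 : p = p * ∑ r ∈ Finset.range M, cnt r := by
        conv_lhs => rw [← htot]
        exact hcalc
      by_contra hT1
      rcases Nat.eq_zero_or_pos (∑ r ∈ Finset.range M, cnt r) with h0 | hpos
      · rw [h0, mul_zero] at h3
        exact hpne h3
      · have h2 : 2 ≤ ∑ r ∈ Finset.range M, cnt r := by omega
        have h4 : p * 2 ≤ p * ∑ r ∈ Finset.range M, cnt r := Nat.mul_le_mul_left p h2
        rw [← h3] at h4
        omega
    have hdec : ∀ c : ℚ_[p], e c = e c % M + e c / M * M := fun c =>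
      (Nat.mod_add_div' (e c) M).symm
    have hslt : ∀ c : ℚ_[p], e c / M < p := by
      intro c
      rw [Nat.div_lt_iff_lt_mul hM0]
      rw [← hMN]
      exact he_lt c
    have hcnt1 : ∀ c ∈ C, cnt (e c) = 1 ∧ cnt (e c % M) = 1 := by
      intro c hc
      have h1 : 1 ≤ cnt (e c) := by
        rw [hcntdef]
        refine Nat.one_le_iff_ne_zero.mpr (Finset.card_ne_zero_of_mem (a := c) ?_)
        exact Finset.mem_filter.mpr ⟨hc, rfl⟩
      have h2 : cnt (e c) = cnt (e c % M) := by
        conv_lhs => rw [hdec c]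
        exact hper' _ (Nat.mod_lt _ hM0) _ (hslt c)
      have h3 : cnt (e c % M) ≤ 1 := by
        rw [← hone]
        exact Finset.single_le_sum (f := cnt) (fun i _ => Nat.zero_le _)
          (Finset.mem_range.mpr (Nat.mod_lt _ hM0))
      omega
    intro c hc c' hc' hcc
    rw [hkey c hc c' hc']
    have he_inj : e c ≠ e c' := by
      intro hee
      have h1 := (hcnt1 c hc).1
      rw [hcntdef] at h1
      simp only at h1
      have hcmem : c ∈ C.filter (fun x => e x = e c) := Finset.mem_filter.mpr ⟨hc, rfl⟩
      have hcmem' : c' ∈ C.filter (fun x => e x = e c) :=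
        Finset.mem_filter.mpr ⟨hc', hee.symm⟩
      exact hcc (Finset.card_le_one.mp (le_of_eq h1) c hcmem c' hcmem')
    have hre : e c % M = e c' % M := by
      by_contra hrne
      have hsub : ({e c % M, e c' % M} : Finset ℕ) ⊆ Finset.range M := by
        intro x hx
        simp only [Finset.mem_insert, Finset.mem_singleton] at hx
        rcases hx with h | h <;> rw [h] <;> exact Finset.mem_range.mpr (Nat.mod_lt _ hM0)
      have hps := Finset.sum_le_sum_of_subset (f := cnt) hsub
      rw [Finset.sum_pair hrne, hone] at hps
      have hA := (hcnt1 c hc).2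
      have hB := (hcnt1 c' hc').2
      omega
    have hDM : ((e c : ℤ)) - ((e c' : ℤ))
        = (((e c / M : ℕ) : ℤ) - ((e c' / M : ℕ) : ℤ)) * (M : ℤ) := by
      have h1 : (e c : ℤ) = ((e c % M : ℕ) : ℤ) + ((e c / M : ℕ) : ℤ) * (M : ℤ) := by
        exact_mod_cast congrArg (fun n : ℕ => (n : ℤ)) (hdec c)
      have h2 : (e c' : ℤ) = ((e c' % M : ℕ) : ℤ) + ((e c' / M : ℕ) : ℤ) * (M : ℤ) := by
        exact_mod_cast congrArg (fun n : ℕ => (n : ℤ)) (hdec c')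
      have h3 : ((e c % M : ℕ) : ℤ) = ((e c' % M : ℕ) : ℤ) := by exact_mod_cast hre
      linear_combination h1 - h2 + h3
    have hMZ : ((M : ℕ) : ℤ) = (p:ℤ)^(N-1) := by
      rw [hMdef]
      push_cast
      ring
    have hexpZ : (p:ℤ)^N = (p:ℤ)^(N-1) * p := by
      rw [← pow_succ]
      congr 1
    have hdvd1 : (p:ℤ)^(N-1) ∣ (a c - a c') := by
      have h4 : (p:ℤ)^(N-1) ∣ (a c - (e c:ℤ)) :=
        dvd_trans (pow_dvd_pow _ (by omega : N - 1 ≤ N)) (hae c)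
      have h5 : (p:ℤ)^(N-1) ∣ (a c' - (e c':ℤ)) :=
        dvd_trans (pow_dvd_pow _ (by omega : N - 1 ≤ N)) (hae c')
      have h6 : (p:ℤ)^(N-1) ∣ ((e c:ℤ) - (e c':ℤ)) := by
        rw [hDM, ← hMZ]
        exact Dvd.intro_left _ rfl
      have h7 : a c - a c' = (a c - (e c:ℤ)) - (a c' - (e c':ℤ)) + ((e c:ℤ) - (e c':ℤ)) := by
        ring
      rw [h7]
      exact dvd_add (dvd_sub h4 h5) h6
    refine ⟨hdvd1, ?_⟩
    intro hdn
    have h7 : (p:ℤ)^N ∣ ((e c:ℤ) - (e c':ℤ)) := by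
      have h8 : (e c:ℤ) - (e c':ℤ)
          = (a c - a c') - (a c - (e c:ℤ)) + (a c' - (e c':ℤ)) := by ring
      rw [h8]
      exact dvd_add (dvd_sub hdn (hae c)) (hae c')
    have hD0 : (e c:ℤ) - (e c':ℤ) ≠ 0 := by
      intro h
      have h9 := sub_eq_zero.mp h
      exact he_inj (by exact_mod_cast h9)
    have hle := Int.le_of_dvd (abs_pos.mpr hD0) ((dvd_abs _ _).mpr h7)
    have habs : |((e c:ℤ) - (e c':ℤ))| ≤ ((p:ℤ) - 1) * (M:ℤ) := by
      rw [hDM, abs_mul]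
      have hMabs : |(M:ℤ)| = (M:ℤ) := abs_of_nonneg (by positivity)
      rw [hMabs]
      have hb : |(((e c / M : ℕ)):ℤ) - ((e c' / M : ℕ):ℤ)| ≤ (p:ℤ) - 1 := by
        have h1 : e c / M < p := hslt c
        have h2 : e c' / M < p := hslt c'
        obtain ⟨s1, hs1⟩ : ∃ s, e c / M = s := ⟨_, rfl⟩
        obtain ⟨s2, hs2⟩ : ∃ s, e c' / M = s := ⟨_, rfl⟩
        rw [hs1] at h1 ⊢
        rw [hs2] at h2 ⊢
        rw [abs_le]
        omega
      exact mul_le_mul_of_nonneg_right hb (by positivity)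
    have hpNlt : ((p:ℤ) - 1) * (M:ℤ) < (p:ℤ)^N := by
      have hcast : ((p:ℤ))^N = (p:ℤ) * (M:ℤ) := by exact_mod_cast congrArg (fun n : ℕ => (n : ℤ)) hMN
      rw [hcast]
      have hM0' : (0:ℤ) < (M:ℤ) := by exact_mod_cast hM0
      nlinarith
    linarith
  · -- distances → sum = 0
    intro hC'
    obtain ⟨c₀, hc₀⟩ := Finset.card_pos.mp (by rw [hC]; exact hp.out.pos)
    have hdvd : ∀ c ∈ C, (p:ℤ)^(N-1) ∣ (a c - a c₀) := by
      intro c hc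
      by_cases h : c = c₀
      · subst h; simp
      · exact ((hkey c hc c₀ hc₀).mp (hC' c hc c₀ hc₀ h)).1
    set u : ℚ_[p] → ℤ := fun c => (a c - a c₀) / (p:ℤ)^(N-1) with hudef
    have hu : ∀ c ∈ C, a c = a c₀ + (p:ℤ)^(N-1) * u c := by
      intro c hc
      rw [hudef]
      simp only
      rw [Int.mul_ediv_cancel' (hdvd c hc)]
      ring
    set ω : ℂ := ζ ^ (p ^ (N-1)) with hωdef
    have hωprim : IsPrimitiveRoot ω p := by
      refine hζprim.pow (pow_pos hp.out.pos N) ?_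
      rw [← pow_succ]
      congr 1
    have hω0 : ω ≠ 0 := pow_ne_zero _ hζ0
    have hωpow : ω ^ p = 1 := hωprim.pow_eq_one
    set g : ℚ_[p] → ZMod p := fun c => ((u c : ZMod p)) with hgdef
    have hginj : Set.InjOn g C := by
      intro c hc c' hc' hg
      by_contra hne
      have hnd := ((hkey c hc c' hc' ).mp (hC' c hc c' hc' hne)).2
      have hdd : (p:ℤ) ∣ (u c - u c') := by
        rw [hgdef] at hg
        simp only at hg
        rw [ZMod.intCast_eq_intCast_iff] at hg
        exact dvd_sub_comm.mp (Int.ModEq.dvd hg)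
      obtain ⟨v, hv⟩ := hdd
      refine hnd ⟨v, ?_⟩
      have h1 : a c - a c' = (p:ℤ)^(N-1) * (u c - u c') := by
        rw [hu c hc, hu c' hc']; ring
      have hexp : (p:ℤ)^N = (p:ℤ)^(N-1) * p := by
        rw [← pow_succ]; congr 1
      rw [h1, hv, hexp]; ring
    have himg : C.image g = Finset.univ := by
      apply Finset.eq_univ_of_card
      rw [Finset.card_image_of_injOn hginj, hC, ZMod.card]
    have hterm : ∀ c ∈ C, stdChar p c = ζ ^ (a c₀) * ω ^ ((g c).val) := by
      intro c hc
      rw [hchar c hc, hu c hc, zpow_add₀ hζ0]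
      congr 1
      have h1 : ζ ^ ((p:ℤ)^(N-1) * u c) = ω ^ (u c) := by
        rw [zpow_mul]
        congr 1
      rw [h1, ← zpow_natCast ω ((g c).val)]
      apply zpow_congr_mod ω hω0 p hωpow
      have : (((g c).val : ℤ) : ZMod p) = ((u c : ℤ) : ZMod p) := by
        rw [hgdef]
        simp only
        push_cast
        simp [ZMod.natCast_val]
      rw [ZMod.intCast_eq_intCast_iff] at this
      exact Int.ModEq.dvd this
    calc ∑ c ∈ C, stdChar p c = ∑ c ∈ C, ζ ^ (a c₀) * ω ^ ((g c).val) :=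
          Finset.sum_congr rfl hterm
      _ = ζ ^ (a c₀) * ∑ c ∈ C, ω ^ ((g c).val) := by rw [Finset.mul_sum]
      _ = ζ ^ (a c₀) * ∑ t ∈ C.image g, ω ^ (t.val) := by
          rw [Finset.sum_image (fun x hx y hy h => hginj hx hy h)]
      _ = ζ ^ (a c₀) * ∑ t : ZMod p, ω ^ (t.val) := by rw [himg]
      _ = ζ ^ (a c₀) * ∑ i ∈ Finset.range p, ω ^ i := by
          congr 1
          exact Finset.sum_nbij' (i := fun t => t.val) (j := fun i => (i : ZMod p))
            (fun t _ => Finset.mem_range.mpr (ZMod.val_lt t))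
            (fun i _ => Finset.mem_univ _)
            (fun t _ => ZMod.natCast_rightInverse t)
            (fun i hi => ZMod.val_cast_of_lt (Finset.mem_range.mp hi))
            (fun t _ => rfl)
      _ = ζ ^ (a c₀) * 0 := by rw [hωprim.geom_sum_eq_zero hp1]
      _ = 0 := mul_zero _
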